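/- arXiv:2404.06642 — 2 statements merged into one kernel-verified Lean document; each statement's English description precedes it below -/
import Mathlib

section
/- Let ψ(y) = ∑_{n=1}^∞ e^{-π n² y} and τ ∈ (0, 1/2]. For x ≥ 1 define G(x) = x^{(-2τ+1)/4} ∫_0^∞ y^{τ-1} ψ(x/y) ψ(y) dy. Then for every k ∈ ℕ there is a constant C_k (depending on τ, k) such that G(x) ≤ C_k x^{-k} for all x ≥ 1; i.e., G decays faster than any polynomial as x → ∞. -/
open Real Set MeasureTheory

noncomputable def jacobiPsi (y : ℝ) : ℝ := ∑' n : ℕ, Real.exp (-π * ((n : ℝ) + 1) ^ 2 * y)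

private lemma exp_neg_le_fact (m : ℕ) {t : ℝ} (ht : 0 < t) :
    Real.exp (-t) ≤ (m.factorial : ℝ) / t ^ m := by
  have h1 : t ^ m / (m.factorial : ℝ) ≤ Real.exp t := Real.pow_div_factorial_le_exp t ht.le m
  have h2 : 0 < t ^ m / (m.factorial : ℝ) := by positivity
  calc Real.exp (-t) = (Real.exp t)⁻¹ := Real.exp_neg t
    _ ≤ (t ^ m / (m.factorial : ℝ))⁻¹ := by
        exact inv_anti₀ h2 h1
    _ = (m.factorial : ℝ) / t ^ m := by rw [inv_div]

private lemma hS2 : Summable (fun n : ℕ => 1 / ((n : ℝ) + 1) ^ 2) := by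
  have h : Summable (fun n : ℕ => 1 / ((n : ℝ)) ^ 2) :=
    summable_one_div_nat_pow.mpr one_lt_two
  have := (summable_nat_add_iff 1).mpr h
  refine this.congr fun n => ?_
  push_cast
  ring_nf

private lemma term_le (m : ℕ) (hm : 1 ≤ m) {z : ℝ} (hz : 0 < z) (n : ℕ) :
    Real.exp (-π * ((n : ℝ) + 1) ^ 2 * z) ≤
      ((m.factorial : ℝ) / (π * z) ^ m) * (1 / ((n : ℝ) + 1) ^ 2) := by
  have hn1 : (1 : ℝ) ≤ ((n : ℝ) + 1) ^ 2 := by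
    have : (0:ℝ) ≤ (n : ℝ) := Nat.cast_nonneg n
    nlinarith
  have ht : 0 < π * ((n : ℝ) + 1) ^ 2 * z := by positivity
  have h1 : Real.exp (-π * ((n : ℝ) + 1) ^ 2 * z) ≤
      (m.factorial : ℝ) / (π * ((n : ℝ) + 1) ^ 2 * z) ^ m := by
    have := exp_neg_le_fact m ht
    simpa [neg_mul, mul_assoc, mul_comm, mul_left_comm] using this
  refine h1.trans ?_
  have hpow : (π * ((n : ℝ) + 1) ^ 2 * z) ^ m = (π * z) ^ m * (((n : ℝ) + 1) ^ 2) ^ m := by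
    rw [← mul_pow]; ring_nf
  rw [hpow]
  have h2 : ((n : ℝ) + 1) ^ 2 ≤ (((n : ℝ) + 1) ^ 2) ^ m := le_self_pow₀ hn1 (by omega)
  have hb : (0:ℝ) < (π * z) ^ m * ((n : ℝ) + 1) ^ 2 := by positivity
  calc (m.factorial : ℝ) / ((π * z) ^ m * (((n : ℝ) + 1) ^ 2) ^ m)
      ≤ (m.factorial : ℝ) / ((π * z) ^ m * ((n : ℝ) + 1) ^ 2) := by
        apply div_le_div_of_nonneg_left (by positivity) hb
        exact mul_le_mul_of_nonneg_left h2 (by positivity)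
    _ = ((m.factorial : ℝ) / (π * z) ^ m) * (1 / ((n : ℝ) + 1) ^ 2) := by
        field_simp

private lemma summable_psi {z : ℝ} (hz : 0 < z) :
    Summable (fun n : ℕ => Real.exp (-π * ((n : ℝ) + 1) ^ 2 * z)) := by
  refine Summable.of_nonneg_of_le (fun n => (Real.exp_pos _).le)
    (fun n => term_le 1 le_rfl hz n) ?_
  exact hS2.mul_left _

private lemma psi_le_pow (m : ℕ) (hm : 1 ≤ m) {z : ℝ} (hz : 0 < z) :
    jacobiPsi z ≤ (m.factorial : ℝ) * (∑' n : ℕ, 1 / ((n : ℝ) + 1) ^ 2) / (π * z) ^ m := by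
  have h := Summable.tsum_le_tsum (term_le m hm hz) (summable_psi hz) (hS2.mul_left _)
  calc jacobiPsi z ≤ ∑' n : ℕ, ((m.factorial : ℝ) / (π * z) ^ m) * (1 / ((n : ℝ) + 1) ^ 2) := h
    _ = ((m.factorial : ℝ) / (π * z) ^ m) * ∑' n : ℕ, 1 / ((n : ℝ) + 1) ^ 2 := tsum_mul_left
    _ = (m.factorial : ℝ) * (∑' n : ℕ, 1 / ((n : ℝ) + 1) ^ 2) / (π * z) ^ m := by ring

private lemma psi_half {z : ℝ} (hz : 0 < z) :
    jacobiPsi z ≤ Real.exp (-(π / 2 * z)) * jacobiPsi (z / 2) := by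
  have hterm : ∀ n : ℕ, Real.exp (-π * ((n : ℝ) + 1) ^ 2 * z) ≤
      Real.exp (-(π / 2 * z)) * Real.exp (-π * ((n : ℝ) + 1) ^ 2 * (z / 2)) := by
    intro n
    rw [← Real.exp_add]
    apply Real.exp_le_exp.mpr
    have hn1 : (1 : ℝ) ≤ ((n : ℝ) + 1) ^ 2 := by
      have : (0:ℝ) ≤ (n : ℝ) := Nat.cast_nonneg n
      nlinarith
    have key : π * z * 1 ≤ π * z * ((n : ℝ) + 1) ^ 2 :=
      mul_le_mul_of_nonneg_left hn1 (le_of_lt (mul_pos Real.pi_pos hz))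
    nlinarith [key]
  have hsum : Summable (fun n : ℕ =>
      Real.exp (-(π / 2 * z)) * Real.exp (-π * ((n : ℝ) + 1) ^ 2 * (z / 2))) :=
    (summable_psi (by linarith : (0:ℝ) < z / 2)).mul_left _
  have h := Summable.tsum_le_tsum hterm (summable_psi hz) hsum
  calc jacobiPsi z ≤ ∑' n : ℕ,
      Real.exp (-(π / 2 * z)) * Real.exp (-π * ((n : ℝ) + 1) ^ 2 * (z / 2)) := h
    _ = Real.exp (-(π / 2 * z)) * jacobiPsi (z / 2) := tsum_mul_left

private lemma psi_decay {z : ℝ} (hz : 0 < z) :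
    jacobiPsi z ≤ 2 * (∑' n : ℕ, 1 / ((n : ℝ) + 1) ^ 2) / π * z⁻¹ * Real.exp (-(π / 2 * z)) := by
  have h1 := psi_half hz
  have h2 := psi_le_pow 1 le_rfl (by linarith : (0:ℝ) < z / 2)
  have hπ := Real.pi_pos
  calc jacobiPsi z ≤ Real.exp (-(π / 2 * z)) * jacobiPsi (z / 2) := h1
    _ ≤ Real.exp (-(π / 2 * z)) *
        ((1 : ℕ).factorial * (∑' n : ℕ, 1 / ((n : ℝ) + 1) ^ 2) / (π * (z / 2)) ^ 1) :=
        mul_le_mul_of_nonneg_left h2 (Real.exp_pos _).le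
    _ = 2 * (∑' n : ℕ, 1 / ((n : ℝ) + 1) ^ 2) / π * z⁻¹ * Real.exp (-(π / 2 * z)) := by
        simp only [Nat.factorial_one, Nat.cast_one, pow_one]
        field_simp

theorem G_rapid_decay (τ : ℝ) (hτ : τ ∈ Set.Ioc (0 : ℝ) (1 / 2)) :
    ∀ k : ℕ, ∃ C : ℝ, ∀ x : ℝ, 1 ≤ x →
      x ^ ((-2 * τ + 1) / 4) *
          (∫ y in Set.Ioi (0 : ℝ), y ^ (τ - 1) * jacobiPsi (x / y) * jacobiPsi y)
        ≤ C * x ^ (-(k : ℝ)) := by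
  intro k
  have hπ := Real.pi_pos
  obtain ⟨hτ0, hτ12⟩ := hτ
  set m : ℕ := k + 1 with hm
  set S : ℝ := ∑' n : ℕ, 1 / ((n : ℝ) + 1) ^ 2 with hSdef
  have hS0 : 0 ≤ S := tsum_nonneg fun n => by positivity
  set s : ℝ := τ + (m : ℝ) - 1 with hsdef
  have hs : 0 < s := by
    have : (m : ℝ) = (k : ℝ) + 1 := by push_cast [hm]; ring
    rw [hsdef, this]
    have : (0:ℝ) ≤ (k : ℝ) := Nat.cast_nonneg k
    linarith
  -- integrability of the comparison function
  have hInt : IntegrableOn (fun y => Real.exp (-(π / 2 * y)) * y ^ (s - 1)) (Ioi (0:ℝ)) := by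
    have base := Real.GammaIntegral_convergent hs
    have hc : (0:ℝ) < π / 2 := by linarith
    have h1 : IntegrableOn (fun y => Real.exp (-(π / 2 * y)) * (π / 2 * y) ^ (s - 1))
        (Ioi (0:ℝ)) := by
      have := (integrableOn_Ioi_comp_mul_left_iff
        (fun u => Real.exp (-u) * u ^ (s - 1)) 0 hc).mpr (by simpa using base)
      simpa using this
    have h2 : IntegrableOn
        (fun y => (π / 2) ^ (s - 1) * (Real.exp (-(π / 2 * y)) * y ^ (s - 1)))
        (Ioi (0:ℝ)) := by
      refine h1.congr_fun (fun y hy => ?_) measurableSet_Ioi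
      dsimp only
      rw [Real.mul_rpow hc.le (le_of_lt hy)]
      ring
    have hne : ((π / 2 : ℝ) ^ (s - 1)) ≠ 0 := (Real.rpow_pos_of_pos hc _).ne'
    have h3 : IntegrableOn
        (fun y => ((π / 2 : ℝ) ^ (s - 1))⁻¹ *
          ((π / 2) ^ (s - 1) * (Real.exp (-(π / 2 * y)) * y ^ (s - 1)))) (Ioi (0:ℝ)) :=
      h2.const_mul _
    refine h3.congr_fun (fun y _ => ?_) measurableSet_Ioi
    field_simp
  set D : ℝ := ∫ y in Ioi (0:ℝ), Real.exp (-(π / 2 * y)) * y ^ (s - 1) with hDdef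
  have hD0 : 0 ≤ D := by
    rw [hDdef]
    refine setIntegral_nonneg measurableSet_Ioi fun y hy => ?_
    have : (0:ℝ) < y := hy
    positivity
  set A : ℝ := 2 * (m.factorial : ℝ) * S ^ 2 / π ^ (m + 1) with hAdef
  have hA0 : 0 ≤ A := by rw [hAdef]; positivity
  refine ⟨A * D, fun x hx => ?_⟩
  have hx0 : (0:ℝ) < x := lt_of_lt_of_le one_pos hx
  -- the comparison function
  set g : ℝ → ℝ := fun y => (A * x ^ (-(m:ℝ))) * (Real.exp (-(π / 2 * y)) * y ^ (s - 1))
    with hgdef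
  have hgint : IntegrableOn g (Ioi (0:ℝ)) := hInt.const_mul _
  have hfg : ∀ y ∈ Ioi (0:ℝ), y ^ (τ - 1) * jacobiPsi (x / y) * jacobiPsi y ≤ g y := by
    intro y hy
    have hy0 : (0:ℝ) < y := hy
    have hxy : (0:ℝ) < x / y := div_pos hx0 hy0
    have h1 := psi_le_pow m (by omega) hxy
    have h2 := psi_decay hy0
    have hP : (0:ℝ) ≤ y ^ (τ - 1) := Real.rpow_nonneg hy0.le _
    have step1 : y ^ (τ - 1) * jacobiPsi (x / y) * jacobiPsi y ≤
        y ^ (τ - 1) * ((m.factorial : ℝ) * S / (π * (x / y)) ^ m) *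
          (2 * S / π * y⁻¹ * Real.exp (-(π / 2 * y))) := by
      have t1 : y ^ (τ - 1) * jacobiPsi (x / y) ≤
          y ^ (τ - 1) * ((m.factorial : ℝ) * S / (π * (x / y)) ^ m) :=
        mul_le_mul_of_nonneg_left h1 hP
      refine mul_le_mul t1 h2 (tsum_nonneg fun n => (Real.exp_pos _).le) ?_
      positivity
    refine step1.trans_eq ?_
    -- algebraic identity
    have hys : y ^ (s - 1) = y ^ (τ - 1) * y ^ (m : ℕ) * y⁻¹ := by
      rw [← Real.rpow_natCast y m, ← Real.rpow_neg_one y, ← Real.rpow_add hy0,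
        ← Real.rpow_add hy0]
      congr 1
      rw [hsdef]; ring
    have hxm : x ^ (-(m:ℝ)) = (x ^ (m : ℕ))⁻¹ := by
      rw [Real.rpow_neg hx0.le, Real.rpow_natCast]
    rw [hgdef]
    simp only [hys, hxm, hAdef]
    have hdiv : (π * (x / y)) ^ m = π ^ m * x ^ m / y ^ m := by
      rw [mul_pow, div_pow]; ring
    rw [hdiv]
    have hyne : y ≠ 0 := hy0.ne'
    have hxne : x ≠ 0 := hx0.ne'
    have hπne : π ≠ 0 := hπ.ne'
    field_simp
    ring
  have h0f : ∀ y ∈ Ioi (0:ℝ), 0 ≤ y ^ (τ - 1) * jacobiPsi (x / y) * jacobiPsi y := by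
    intro y hy
    have hy0 : (0:ℝ) < y := hy
    have := Real.rpow_nonneg hy0.le (τ - 1)
    have p1 : (0:ℝ) ≤ jacobiPsi (x / y) := tsum_nonneg fun n => (Real.exp_pos _).le
    have p2 : (0:ℝ) ≤ jacobiPsi y := tsum_nonneg fun n => (Real.exp_pos _).le
    positivity
  have hmono : (∫ y in Ioi (0:ℝ), y ^ (τ - 1) * jacobiPsi (x / y) * jacobiPsi y) ≤
      ∫ y in Ioi (0:ℝ), g y := by
    refine integral_mono_of_nonneg ?_ hgint ?_
    · exact (ae_restrict_iff' measurableSet_Ioi).mpr (ae_of_all _ h0f)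
    · exact (ae_restrict_iff' measurableSet_Ioi).mpr (ae_of_all _ hfg)
  have hgval : (∫ y in Ioi (0:ℝ), g y) = (A * x ^ (-(m:ℝ))) * D := by
    rw [hgdef, hDdef]
    exact integral_const_mul _ _
  have hxa : (0:ℝ) ≤ x ^ ((-2 * τ + 1) / 4) := Real.rpow_nonneg hx0.le _
  calc x ^ ((-2 * τ + 1) / 4) *
          (∫ y in Ioi (0:ℝ), y ^ (τ - 1) * jacobiPsi (x / y) * jacobiPsi y)
      ≤ x ^ ((-2 * τ + 1) / 4) * ((A * x ^ (-(m:ℝ))) * D) := by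
        rw [← hgval]; exact mul_le_mul_of_nonneg_left hmono hxa
    _ = (A * D) * (x ^ ((-2 * τ + 1) / 4) * x ^ (-(m:ℝ))) := by ring
    _ = (A * D) * x ^ ((-2 * τ + 1) / 4 + -(m:ℝ)) := by
        rw [← Real.rpow_add hx0]
    _ ≤ (A * D) * x ^ (-(k:ℝ)) := by
        refine mul_le_mul_of_nonneg_left ?_ (mul_nonneg hA0 hD0)
        refine Real.rpow_le_rpow_of_exponent_le hx ?_
        have hmk : (m : ℝ) = (k : ℝ) + 1 := by push_cast [hm]; ring
        rw [hmk]
        linarith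
end

section
/- Let ψ(y) = ∑_{n=1}^∞ e^{-π n² y} and τ ∈ (0, 1/2]. Then the quantity B_n(τ) := ∫_0^∞ ∫_0^∞ [ln(uv)]^{4n-4} ln(u/v) u^{(2τ-3)/4} v^{(-2τ-3)/4} 1_{{uv>1}} ψ(u) ψ(v) du dv is strictly positive for every n ≥ 1, and τ ↦ B_n(τ) is nondecreasing on (0, 1/2]. -/
open Real Set MeasureTheory

/-- `B n τ = ∫∫ [ln(uv)]^{4n-4} ln(u/v) u^{(2τ-3)/4} v^{(-2τ-3)/4} 1_{uv>1} ψ(u) ψ(v) du dv`. -/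
noncomputable def B (n : ℕ) (τ : ℝ) : ℝ :=
  ∫ p : ℝ × ℝ in Set.Ioi 0 ×ˢ Set.Ioi 0,
    (Real.log (p.1 * p.2)) ^ (4 * n - 4) * Real.log (p.1 / p.2) *
      p.1 ^ ((2 * τ - 3) / 4) * p.2 ^ ((-2 * τ - 3) / 4) *
      (if 1 < p.1 * p.2 then (1 : ℝ) else 0) * jacobiPsi p.1 * jacobiPsi p.2


lemma psi_term_le {y : ℝ} (hy : 0 < y) (n : ℕ) :
    Real.exp (-π * ((n : ℝ) + 1) ^ 2 * y) ≤ Real.exp (-π * y) ^ (n + 1) := by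
  rw [← Real.exp_nat_mul]
  apply Real.exp_le_exp.2
  have h1 : (0:ℝ) ≤ (n:ℝ) := Nat.cast_nonneg n
  have hπ := Real.pi_pos
  push_cast
  nlinarith [mul_pos hπ hy, mul_nonneg h1 (mul_pos hπ hy).le]

lemma psi_geom_summable {y : ℝ} (hy : 0 < y) :
    Summable (fun n : ℕ => Real.exp (-π * y) ^ (n + 1)) := by
  have hr : Real.exp (-π * y) < 1 := by
    rw [Real.exp_lt_one_iff]; nlinarith [Real.pi_pos]
  exact ((summable_geometric_of_lt_one (Real.exp_pos _).le hr).mul_right _).congr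
    (fun n => by rw [pow_succ])

lemma psi_summable {y : ℝ} (hy : 0 < y) :
    Summable (fun n : ℕ => Real.exp (-π * ((n : ℝ) + 1) ^ 2 * y)) :=
  Summable.of_nonneg_of_le (fun _ => (Real.exp_pos _).le) (psi_term_le hy) (psi_geom_summable hy)

lemma psi_nonneg (y : ℝ) : 0 ≤ jacobiPsi y :=
  tsum_nonneg fun _ => (Real.exp_pos _).le

lemma psi_pos {y : ℝ} (hy : 0 < y) : 0 < jacobiPsi y :=
  Summable.tsum_pos (psi_summable hy) (fun _ => (Real.exp_pos _).le) 0 (Real.exp_pos _)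

lemma psi_le {y : ℝ} (hy : 0 < y) : jacobiPsi y ≤ (1 + 1 / (π * y)) * Real.exp (-π * y) := by
  have hπ := Real.pi_pos
  set r := Real.exp (-π * y) with hr
  have hr0 : 0 < r := Real.exp_pos _
  have hr1 : r < 1 := by rw [hr, Real.exp_lt_one_iff]; nlinarith
  have h1 : jacobiPsi y ≤ ∑' n : ℕ, r ^ (n + 1) :=
    Summable.tsum_le_tsum (psi_term_le hy) (psi_summable hy) (psi_geom_summable hy)
  have h2 : ∑' n : ℕ, r ^ (n + 1) = (1 - r)⁻¹ * r := by
    calc ∑' n : ℕ, r ^ (n + 1) = ∑' n : ℕ, r ^ n * r := tsum_congr fun n => pow_succ r n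
      _ = (∑' n : ℕ, r ^ n) * r := tsum_mul_right
      _ = (1 - r)⁻¹ * r := by rw [tsum_geometric_of_lt_one hr0.le hr1]
  have hx : 0 < π * y := by positivity
  have key : (1 - r)⁻¹ ≤ 1 + 1 / (π * y) := by
    rw [inv_le_iff_one_le_mul₀ (by linarith)]
    have hexp : π * y + 1 ≤ Real.exp (π * y) := Real.add_one_le_exp _
    have hre : r * Real.exp (π * y) = 1 := by
      rw [hr, ← Real.exp_add]; norm_num
    have h3 : (π * y + 1) * r ≤ 1 := by
      calc (π * y + 1) * r ≤ Real.exp (π * y) * r := by nlinarith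
        _ = 1 := by rw [mul_comm]; exact hre
    have key2 : (π * y) * ((1 + 1/(π*y))*(1-r)) = (π*y+1)*(1-r) := by
      field_simp
    nlinarith
  calc jacobiPsi y ≤ (1 - r)⁻¹ * r := h2 ▸ h1
    _ ≤ (1 + 1 / (π * y)) * r := by nlinarith


lemma psi_measurable : Measurable jacobiPsi := by
  have h : jacobiPsi = fun y =>
      (∑' n : ℕ, ENNReal.ofReal (Real.exp (-π * ((n : ℝ) + 1) ^ 2 * y))).toReal := by
    ext y
    by_cases hs : Summable (fun n : ℕ => Real.exp (-π * ((n : ℝ) + 1) ^ 2 * y))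
    · rw [← ENNReal.ofReal_tsum_of_nonneg (fun n => (Real.exp_pos _).le) hs,
        ENNReal.toReal_ofReal (tsum_nonneg fun n => (Real.exp_pos _).le)]
      rfl
    · have htop : (∑' n : ℕ, ENNReal.ofReal (Real.exp (-π * ((n : ℝ) + 1) ^ 2 * y))) = ⊤ := by
        by_contra h
        apply hs
        have h2 : Summable (fun n : ℕ => (Real.exp (-π * ((n : ℝ) + 1) ^ 2 * y)).toNNReal) := by
          rw [← ENNReal.tsum_coe_ne_top_iff_summable]
          convert h using 2 with n
          rfl
        have h3 := NNReal.summable_coe.2 h2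
        refine h3.congr fun n => ?_
        simp [Real.coe_toNNReal _ (Real.exp_pos _).le]
      rw [htop]
      simp only [ENNReal.toReal_top]
      exact tsum_eq_zero_of_not_summable hs
  rw [h]
  apply ENNReal.measurable_toReal.comp
  apply Measurable.ennreal_tsum
  intro n
  exact ENNReal.measurable_ofReal.comp (by fun_prop)


lemma log_le_eps {y ε : ℝ} (hy : 1 ≤ y) (hε : 0 < ε) : Real.log y ≤ ε * y + 1 / ε := by
  have hy0 : (0:ℝ) < y := by linarith
  have h1 : Real.log y = 2 * Real.log (Real.sqrt y) := by
    rw [Real.log_sqrt hy0.le]; ring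
  have h2 : Real.log (Real.sqrt y) ≤ Real.sqrt y := by
    have := Real.log_le_sub_one_of_pos (Real.sqrt_pos.2 hy0)
    linarith
  have h3 : Real.sqrt y ^ 2 = y := Real.sq_sqrt hy0.le
  have h4 : 0 ≤ Real.sqrt y := Real.sqrt_nonneg y
  have h5 : ε * (1/ε) = 1 := by field_simp
  nlinarith [sq_nonneg (ε * Real.sqrt y - 1), h5, mul_pos hε hε]

lemma rpow_exp_range {y e : ℝ} (hy : 0 < y) (h1 : -3/4 ≤ e) (h2 : e ≤ 0) :
    y ^ e ≤ y ^ (-3/4 : ℝ) + 1 := by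
  rcases le_total y 1 with h | h
  · have := Real.rpow_le_rpow_of_exponent_ge hy h h1
    linarith
  · have h3 : y ^ e ≤ y ^ (0:ℝ) := Real.rpow_le_rpow_of_exponent_le h h2
    rw [Real.rpow_zero] at h3
    have : 0 ≤ y ^ (-3/4 : ℝ) := (Real.rpow_pos_of_pos hy _).le
    linarith

lemma abs_log_pow_le {y : ℝ} (k : ℕ) (hk : 1 ≤ k) (hy0 : 0 < y) (hy1 : y ≤ 1) :
    |Real.log y| ^ k ≤ (8*k:ℝ)^k * y ^ (-(1/8) : ℝ) := by
  have hk0 : (0:ℝ) < (k:ℝ) := by exact_mod_cast hk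
  have hyi : 1 ≤ y⁻¹ := one_le_inv_iff₀.2 ⟨hy0, hy1⟩
  have hyi0 : (0:ℝ) < y⁻¹ := by positivity
  set c : ℝ := 1 / (8*k) with hc
  have hc0 : 0 < c := by positivity
  have hstep : |Real.log y| ≤ (8*k:ℝ) * (y⁻¹) ^ c := by
    have hlogle : Real.log y ≤ 0 := Real.log_nonpos hy0.le hy1
    have h0 : |Real.log y| = Real.log y⁻¹ := by
      rw [Real.log_inv, abs_of_nonpos hlogle]
    have h1 : Real.log y⁻¹ = (1/c) * Real.log ((y⁻¹) ^ c) := by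
      rw [Real.log_rpow hyi0]
      field_simp
    have h2 : Real.log ((y⁻¹) ^ c) ≤ (y⁻¹) ^ c := by
      have := Real.log_le_sub_one_of_pos (Real.rpow_pos_of_pos hyi0 c)
      linarith
    have h3 : (1/c : ℝ) = 8*k := by rw [hc]; field_simp
    rw [h0, h1, h3]
    have : (0:ℝ) ≤ 8*k := by positivity
    exact mul_le_mul_of_nonneg_left h2 this
  calc |Real.log y| ^ k ≤ ((8*k:ℝ) * (y⁻¹) ^ c) ^ k :=
        pow_le_pow_left₀ (abs_nonneg _) hstep k
    _ = (8*k:ℝ)^k * ((y⁻¹) ^ c) ^ (k:ℕ) := mul_pow _ _ _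
    _ = (8*k:ℝ)^k * y ^ (-(1/8) : ℝ) := by
        rw [← Real.rpow_natCast ((y⁻¹) ^ c) k, ← Real.rpow_mul hyi0.le]
        congr 1
        have : c * (k:ℝ) = 1/8 := by rw [hc]; field_simp
        rw [this, Real.inv_rpow hy0.le, ← Real.rpow_neg hy0.le]

lemma pow_le_exp_big {y : ℝ} (k : ℕ) (hk : 1 ≤ k) (hy : 1 ≤ y) :
    y ^ (k + 2) ≤ Real.exp (((k:ℝ)+2)^2) * Real.exp (2 * y) := by
  have hy0 : (0:ℝ) < y := by linarith
  have hm : (0:ℝ) < (k:ℝ) + 2 := by positivity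
  have h1 : Real.log (y ^ (k+2)) = ((k:ℝ)+2) * Real.log y := by
    rw [Real.log_pow]; push_cast; ring
  have h2 : Real.log y ≤ (2/((k:ℝ)+2)) * y + ((k:ℝ)+2)/2 := by
    have := log_le_eps hy (show (0:ℝ) < 2/((k:ℝ)+2) by positivity)
    have he : 1 / (2/((k:ℝ)+2)) = ((k:ℝ)+2)/2 := by field_simp
    rw [he] at this; exact this
  have h3 : ((k:ℝ)+2) * Real.log y ≤ 2*y + ((k:ℝ)+2)^2/2 := by
    have := mul_le_mul_of_nonneg_left h2 hm.le
    have he : ((k:ℝ)+2) * ((2/((k:ℝ)+2)) * y + ((k:ℝ)+2)/2) = 2*y + ((k:ℝ)+2)^2/2 := by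
      field_simp
    linarith [he ▸ this]
  calc y ^ (k+2) = Real.exp (Real.log (y ^ (k+2))) :=
        (Real.exp_log (by positivity)).symm
    _ ≤ Real.exp (((k:ℝ)+2)^2 + 2*y) := by
        apply Real.exp_le_exp.2
        rw [h1]
        nlinarith [sq_nonneg ((k:ℝ)+2)]
    _ = Real.exp (((k:ℝ)+2)^2) * Real.exp (2 * y) := by rw [← Real.exp_add]

noncomputable def HC (k : ℕ) : ℝ := 4*((8*k:ℝ)^k+1) + 8*Real.exp (((k:ℝ)+2)^2)

lemma HC_nonneg (k : ℕ) : 0 ≤ HC k := by unfold HC; positivity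

lemma H_le (k : ℕ) (hk : 1 ≤ k) {y : ℝ} (hy : 0 < y) :
    (|Real.log y| ^ k + 1) * (y ^ (-3/4 : ℝ) + 1) * ((1 + y) * Real.exp (-π * y)) ≤
      HC k * (Real.exp (-y) * y ^ ((1/8 : ℝ) - 1)) := by
  have hπ3 : (3:ℝ) < π := Real.pi_gt_three
  have hG : 0 ≤ Real.exp (-y) * y ^ ((1/8:ℝ)-1) := by positivity
  have hexp : Real.exp (-π * y) ≤ Real.exp (-y) := by
    apply Real.exp_le_exp.2; nlinarith
  rcases le_total y 1 with h | h
  · -- small y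
    have h18 : (1:ℝ) ≤ y ^ (-(1/8):ℝ) :=
      Real.one_le_rpow_of_pos_of_le_one_of_nonpos hy h (by norm_num)
    have hA : |Real.log y| ^ k + 1 ≤ ((8*k:ℝ)^k + 1) * y ^ (-(1/8):ℝ) := by
      have := abs_log_pow_le k hk hy h
      nlinarith [pow_nonneg (by positivity : (0:ℝ) ≤ (8*k:ℝ)) k]
    have hB : y ^ (-3/4:ℝ) + 1 ≤ 2 * y ^ (-3/4:ℝ) := by
      have : (1:ℝ) ≤ y ^ (-3/4:ℝ) :=
        Real.one_le_rpow_of_pos_of_le_one_of_nonpos hy h (by norm_num)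
      linarith
    have hCk : (1 + y) * Real.exp (-π*y) ≤ 2 * Real.exp (-y) := by
      have h2 : (1:ℝ) + y ≤ 2 := by linarith
      have := Real.exp_pos (-π*y)
      nlinarith [Real.exp_pos (-y)]
    have hmerge : y ^ (-(1/8):ℝ) * y ^ (-3/4:ℝ) = y ^ ((1/8:ℝ)-1) := by
      rw [← Real.rpow_add hy]; norm_num
    calc (|Real.log y| ^ k + 1) * (y ^ (-3/4 : ℝ) + 1) * ((1 + y) * Real.exp (-π * y))
        ≤ (((8*k:ℝ)^k + 1) * y ^ (-(1/8):ℝ)) * (2 * y ^ (-3/4:ℝ)) * (2 * Real.exp (-y)) := by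
          have n1 : (0:ℝ) ≤ y ^ (-3/4:ℝ) + 1 :=
            add_nonneg (Real.rpow_nonneg hy.le _) zero_le_one
          have n2 : (0:ℝ) ≤ |Real.log y| ^ k + 1 :=
            add_nonneg (pow_nonneg (abs_nonneg _) _) zero_le_one
          have n3 : (0:ℝ) ≤ (1 + y) * Real.exp (-π*y) :=
            mul_nonneg (by linarith) (Real.exp_pos _).le
          have n4 : (0:ℝ) ≤ ((8*k:ℝ)^k + 1) * y ^ (-(1/8):ℝ) * (2 * y ^ (-3/4:ℝ)) :=
            mul_nonneg (mul_nonneg (by positivity) (Real.rpow_nonneg hy.le _))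
              (mul_nonneg (by norm_num) (Real.rpow_nonneg hy.le _))
          exact mul_le_mul (mul_le_mul hA hB n1 (mul_nonneg (by positivity) (Real.rpow_nonneg hy.le _))) hCk n3 n4
      _ = (4*((8*k:ℝ)^k+1)) * (Real.exp (-y) * (y ^ (-(1/8):ℝ) * y ^ (-3/4:ℝ))) := by ring
      _ = (4*((8*k:ℝ)^k+1)) * (Real.exp (-y) * y ^ ((1/8:ℝ)-1)) := by rw [hmerge]
      _ ≤ HC k * (Real.exp (-y) * y ^ ((1/8:ℝ)-1)) := by
          apply mul_le_mul_of_nonneg_right _ hG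
          unfold HC
          nlinarith [Real.exp_pos (((k:ℝ)+2)^2), pow_nonneg (by positivity : (0:ℝ) ≤ 8*k) k]
  · -- large y
    have hy1 : (1:ℝ) ≤ y := h
    have hA : |Real.log y| ^ k + 1 ≤ 2 * y ^ k := by
      have hl : |Real.log y| ≤ y := by
        rw [abs_of_nonneg (Real.log_nonneg h)]
        have := Real.log_le_sub_one_of_pos hy
        linarith
      have h1 : |Real.log y| ^ k ≤ y ^ k := pow_le_pow_left₀ (abs_nonneg _) hl k
      have h2 : (1:ℝ) ≤ y ^ k := one_le_pow₀ hy1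
      linarith
    have hB : y ^ (-3/4:ℝ) + 1 ≤ 2 :=  by
      have : y ^ (-3/4:ℝ) ≤ 1 := Real.rpow_le_one_of_one_le_of_nonpos hy1 (by norm_num)
      linarith
    have hCk : (1 + y) * Real.exp (-π*y) ≤ 2*y * Real.exp (-π*y) := by
      have : (1:ℝ) + y ≤ 2*y := by linarith
      exact mul_le_mul_of_nonneg_right this (Real.exp_pos _).le
    have hmain : 8 * y^(k+1) * Real.exp (-π*y) ≤
        8*Real.exp (((k:ℝ)+2)^2) * (Real.exp (-y) * y ^ ((1/8:ℝ)-1)) := by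
      have hinv : y⁻¹ ≤ y ^ ((1/8:ℝ)-1) := by
        have : y ^ (-1:ℝ) ≤ y ^ ((1/8:ℝ)-1) :=
          Real.rpow_le_rpow_of_exponent_le hy1 (by norm_num)
        rwa [Real.rpow_neg_one] at this
      have hpow := pow_le_exp_big k hk hy1
      have hexp2 : Real.exp (2*y) * Real.exp (-π*y) ≤ Real.exp (-y) := by
        rw [← Real.exp_add]
        apply Real.exp_le_exp.2
        nlinarith
      have hy1e : y^(k+1) = y^(k+2) * y⁻¹ := by
        rw [pow_succ _ (k+1), mul_assoc, mul_inv_cancel₀ (ne_of_gt hy), mul_one]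
      calc 8 * y^(k+1) * Real.exp (-π*y) = 8 * (y^(k+2) * Real.exp (-π*y)) * y⁻¹ := by
            rw [hy1e]; ring
        _ ≤ 8 * (Real.exp (((k:ℝ)+2)^2) * Real.exp (2*y) * Real.exp (-π*y)) * y ^ ((1/8:ℝ)-1) := by
            apply mul_le_mul
            · apply mul_le_mul_of_nonneg_left _ (by norm_num)
              exact mul_le_mul_of_nonneg_right hpow (Real.exp_pos _).le
            · exact hinv
            · exact inv_nonneg.2 hy.le
            · positivity
        _ = 8 * Real.exp (((k:ℝ)+2)^2) * ((Real.exp (2*y) * Real.exp (-π*y)) * y ^ ((1/8:ℝ)-1)) := by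
            ring
        _ ≤ 8 * Real.exp (((k:ℝ)+2)^2) * (Real.exp (-y) * y ^ ((1/8:ℝ)-1)) := by
            apply mul_le_mul_of_nonneg_left _ (by positivity)
            exact mul_le_mul_of_nonneg_right hexp2 (by positivity)
    calc (|Real.log y| ^ k + 1) * (y ^ (-3/4 : ℝ) + 1) * ((1 + y) * Real.exp (-π * y))
        ≤ (2 * y^k) * 2 * (2*y * Real.exp (-π*y)) := by
          have n1 : (0:ℝ) ≤ y ^ (-3/4:ℝ) + 1 :=
            add_nonneg (Real.rpow_nonneg hy.le _) zero_le_one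
          have n2 : (0:ℝ) ≤ |Real.log y| ^ k + 1 :=
            add_nonneg (pow_nonneg (abs_nonneg _) _) zero_le_one
          have n3 : (0:ℝ) ≤ (1 + y) * Real.exp (-π*y) :=
            mul_nonneg (by linarith) (Real.exp_pos _).le
          have n4 : (0:ℝ) ≤ 2 * y^k * 2 :=
            mul_nonneg (mul_nonneg (by norm_num) (pow_nonneg hy.le _)) (by norm_num)
          exact mul_le_mul (mul_le_mul hA hB n1 (mul_nonneg (by norm_num) (pow_nonneg hy.le _))) hCk n3 n4
      _ = 8 * y^(k+1) * Real.exp (-π*y) := by ring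
      _ ≤ 8*Real.exp (((k:ℝ)+2)^2) * (Real.exp (-y) * y ^ ((1/8:ℝ)-1)) := hmain
      _ ≤ HC k * (Real.exp (-y) * y ^ ((1/8:ℝ)-1)) := by
          apply mul_le_mul_of_nonneg_right _ hG
          unfold HC
          nlinarith [Real.exp_pos (((k:ℝ)+2)^2), pow_nonneg (by positivity : (0:ℝ) ≤ 8*k) k]


noncomputable def intg (n : ℕ) (τ : ℝ) (p : ℝ × ℝ) : ℝ :=
  (Real.log (p.1 * p.2)) ^ (4 * n - 4) * Real.log (p.1 / p.2) *
    p.1 ^ ((2 * τ - 3) / 4) * p.2 ^ ((-2 * τ - 3) / 4) *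
    (if 1 < p.1 * p.2 then (1 : ℝ) else 0) * jacobiPsi p.1 * jacobiPsi p.2

noncomputable def Dk (τ t : ℝ) : ℝ := t * (Real.exp (τ*t/2) - Real.exp (-(τ*t/2)))

noncomputable def Phi (n : ℕ) (u v : ℝ) : ℝ :=
  (Real.log (u*v)) ^ (4*n-4) * Real.exp (-(3/4) * Real.log (u*v)) *
    ((if 1 < u*v then (1:ℝ) else 0) * (jacobiPsi u * jacobiPsi v))

lemma Dk_nonneg {τ : ℝ} (hτ : 0 ≤ τ) (t : ℝ) : 0 ≤ Dk τ t := by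
  unfold Dk
  rcases le_total 0 t with h | h
  · apply mul_nonneg h
    have : -(τ*t/2) ≤ τ*t/2 := by nlinarith
    linarith [Real.exp_le_exp.2 this]
  · have h1 : τ*t/2 ≤ -(τ*t/2) := by nlinarith
    have h2 : Real.exp (τ*t/2) - Real.exp (-(τ*t/2)) ≤ 0 := by
      linarith [Real.exp_le_exp.2 h1]
    have := mul_nonneg (neg_nonneg.2 h) (neg_nonneg.2 h2)
    rw [neg_mul_neg] at this
    exact this

lemma Dk_mono {τ₁ τ₂ : ℝ} (hτ1 : 0 ≤ τ₁) (h : τ₁ ≤ τ₂) (t : ℝ) : Dk τ₁ t ≤ Dk τ₂ t := by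
  unfold Dk
  rcases le_total 0 t with ht | ht
  · apply mul_le_mul_of_nonneg_left _ ht
    have h1 : τ₁*t/2 ≤ τ₂*t/2 := by nlinarith
    have h2 : -(τ₂*t/2) ≤ -(τ₁*t/2) := by linarith
    linarith [Real.exp_le_exp.2 h1, Real.exp_le_exp.2 h2]
  · apply mul_le_mul_of_nonpos_left _ ht
    have h1 : τ₂*t/2 ≤ τ₁*t/2 := by nlinarith
    have h2 : -(τ₁*t/2) ≤ -(τ₂*t/2) := by linarith
    linarith [Real.exp_le_exp.2 h1, Real.exp_le_exp.2 h2]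

lemma Dk_pos {τ t : ℝ} (hτ : 0 < τ) (ht : 0 < t) : 0 < Dk τ t := by
  unfold Dk
  apply mul_pos ht
  have : -(τ*t/2) < τ*t/2 := by nlinarith
  linarith [Real.exp_lt_exp.2 this]

lemma alg (m : ℕ) (x y I X Y τ : ℝ) :
    (x+y)^m * (x-y) * Real.exp (x*((2*τ-3)/4)) * Real.exp (y*((-2*τ-3)/4)) * I * X * Y
    + (x+y)^m * (y-x) * Real.exp (y*((2*τ-3)/4)) * Real.exp (x*((-2*τ-3)/4)) * I * Y * X
    = (x+y)^m * Real.exp (-(3/4)*(x+y)) * (I * (X*Y)) *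
        ((x-y)*(Real.exp (τ*(x-y)/2) - Real.exp (-(τ*(x-y)/2)))) := by
  have e1 : Real.exp (x*((2*τ-3)/4)) * Real.exp (y*((-2*τ-3)/4))
      = Real.exp (-(3/4)*(x+y)) * Real.exp (τ*(x-y)/2) := by
    rw [← Real.exp_add, ← Real.exp_add]; congr 1; ring
  have e2 : Real.exp (y*((2*τ-3)/4)) * Real.exp (x*((-2*τ-3)/4))
      = Real.exp (-(3/4)*(x+y)) * Real.exp (-(τ*(x-y)/2)) := by
    rw [← Real.exp_add, ← Real.exp_add]; congr 1; ring
  linear_combination ((x+y)^m * (x-y) * I * X * Y) * e1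
    - ((x+y)^m * (x-y) * I * X * Y) * e2

lemma intg_symm_identity (n : ℕ) (τ : ℝ) {u v : ℝ} (hu : 0 < u) (hv : 0 < v) :
    intg n τ (u, v) + intg n τ (v, u) = Phi n u v * Dk τ (Real.log u - Real.log v) := by
  unfold intg Phi Dk
  simp only
  rw [mul_comm v u]
  rw [Real.log_div hu.ne' hv.ne', Real.log_div hv.ne' hu.ne', Real.log_mul hu.ne' hv.ne']
  simp only [Real.rpow_def_of_pos hu, Real.rpow_def_of_pos hv]
  exact alg (4*n-4) (Real.log u) (Real.log v) _ _ _ τ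

noncomputable def Hfun (k : ℕ) (y : ℝ) : ℝ :=
  (|Real.log y| ^ k + 1) * (y ^ (-3/4 : ℝ) + 1) * ((1 + y) * Real.exp (-π * y))

lemma Hfun_nonneg (k : ℕ) {y : ℝ} (hy : 0 < y) : 0 ≤ Hfun k y := by
  unfold Hfun
  apply mul_nonneg (mul_nonneg (add_nonneg (pow_nonneg (abs_nonneg _) _) zero_le_one)
    (add_nonneg (Real.rpow_nonneg hy.le _) zero_le_one))
  exact mul_nonneg (by linarith) (Real.exp_pos _).le

lemma sum_pow_le (k : ℕ) {x y : ℝ} (hx : 0 ≤ x) (hy : 0 ≤ y) :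
    (x + y) ^ k ≤ 2^k * ((x^k + 1) * (y^k + 1)) := by
  have h1 : x + y ≤ 2 * max x y := by
    rcases le_total x y with h | h
    · rw [max_eq_right h]; linarith
    · rw [max_eq_left h]; linarith
  have h2 : (x+y)^k ≤ (2 * max x y)^k :=
    pow_le_pow_left₀ (by positivity) h1 k
  have h3 : (2 * max x y)^k = 2^k * (max x y)^k := mul_pow _ _ _
  have h4 : (max x y)^k ≤ x^k + y^k := by
    rcases le_total x y with h | h
    · rw [max_eq_right h]; nlinarith [pow_nonneg hx k]
    · rw [max_eq_left h]; nlinarith [pow_nonneg hy k]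
  have h5 : x^k + y^k ≤ (x^k+1)*(y^k+1) := by
    nlinarith [pow_nonneg hx k, pow_nonneg hy k, mul_nonneg (pow_nonneg hx k) (pow_nonneg hy k)]
  calc (x+y)^k ≤ 2^k * (max x y)^k := h3 ▸ h2
    _ ≤ 2^k * (x^k + y^k) := by
        apply mul_le_mul_of_nonneg_left h4 (by positivity)
    _ ≤ 2^k * ((x^k+1)*(y^k+1)) := by
        apply mul_le_mul_of_nonneg_left h5 (by positivity)

lemma rpow_prod_le {τ u v : ℝ} (hτ : τ ∈ Ioc (0:ℝ) (1/2)) (hu : 0 < u) (hv : 0 < v)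
    (h : 1 < u * v) :
    u ^ ((2*τ-3)/4) * v ^ ((-2*τ-3)/4) ≤ (u ^ (-3/4:ℝ) + 1) * (v ^ (-3/4:ℝ) + 1) := by
  obtain ⟨hτ0, hτ2⟩ := hτ
  have hsplit : v ^ ((-2*τ-3)/4) = v ^ (-(τ+1)/2) * v ^ (-(1/4):ℝ) := by
    rw [← Real.rpow_add hv]; congr 1; ring
  have hA4 : u ^ ((2*τ-3)/4) * u ^ ((1:ℝ)/4) = u ^ ((τ-1)/2) := by
    rw [← Real.rpow_add hu]; congr 1; ring
  have hv14 : v ^ (-(1/4):ℝ) ≤ u ^ ((1:ℝ)/4) := by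
    rw [Real.rpow_neg hv.le, ← one_div, div_le_iff₀ (Real.rpow_pos_of_pos hv _)]
    calc (1:ℝ) = 1 ^ ((1:ℝ)/4) := (Real.one_rpow _).symm
      _ ≤ (u*v) ^ ((1:ℝ)/4) := Real.rpow_le_rpow (by norm_num) h.le (by norm_num)
      _ = u ^ ((1:ℝ)/4) * v ^ ((1:ℝ)/4) := Real.mul_rpow hu.le hv.le
  have step : u ^ ((2*τ-3)/4) * v ^ ((-2*τ-3)/4) ≤ u ^ ((τ-1)/2) * v ^ (-(τ+1)/2) := by
    rw [hsplit]
    calc u ^ ((2*τ-3)/4) * (v ^ (-(τ+1)/2) * v ^ (-(1/4):ℝ))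
        ≤ u ^ ((2*τ-3)/4) * (v ^ (-(τ+1)/2) * u ^ ((1:ℝ)/4)) := by
          apply mul_le_mul_of_nonneg_left _ (Real.rpow_nonneg hu.le _)
          exact mul_le_mul_of_nonneg_left hv14 (Real.rpow_nonneg hv.le _)
      _ = (u ^ ((2*τ-3)/4) * u ^ ((1:ℝ)/4)) * v ^ (-(τ+1)/2) := by ring
      _ = u ^ ((τ-1)/2) * v ^ (-(τ+1)/2) := by rw [hA4]
  refine step.trans (mul_le_mul ?_ ?_ (Real.rpow_nonneg hv.le _)
    (add_nonneg (Real.rpow_nonneg hu.le _) zero_le_one))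
  · exact rpow_exp_range hu (by linarith) (by linarith)
  · exact rpow_exp_range hv (by linarith) (by linarith)

lemma psi_prod_le {u v : ℝ} (hu : 0 < u) (hv : 0 < v) (h : 1 < u * v) :
    jacobiPsi u * jacobiPsi v ≤
      ((1 + u) * Real.exp (-π * u)) * ((1 + v) * Real.exp (-π * v)) := by
  have hπ := Real.pi_pos
  have hπ1 : (1:ℝ) < π := by nlinarith [Real.pi_gt_three]
  have q1 : 1 + 1/(π*u) ≤ 1 + v := by
    have : 1/(π*u) ≤ v := by
      rw [div_le_iff₀ (mul_pos hπ hu)]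
      nlinarith
    linarith
  have q2 : 1 + 1/(π*v) ≤ 1 + u := by
    have : 1/(π*v) ≤ u := by
      rw [div_le_iff₀ (mul_pos hπ hv)]
      nlinarith
    linarith
  have n1 : (0:ℝ) ≤ 1 + 1/(π*v) := by
    have : 0 < 1/(π*v) := one_div_pos.2 (mul_pos hπ hv)
    linarith
  calc jacobiPsi u * jacobiPsi v
      ≤ ((1 + 1/(π*u)) * Real.exp (-π*u)) * ((1 + 1/(π*v)) * Real.exp (-π*v)) := by
        apply mul_le_mul (psi_le hu) (psi_le hv) (psi_nonneg v)
        have : 0 < 1/(π*u) := one_div_pos.2 (mul_pos hπ hu)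
        exact mul_nonneg (by linarith) (Real.exp_pos _).le
    _ ≤ ((1 + v) * Real.exp (-π*u)) * ((1 + u) * Real.exp (-π*v)) := by
        apply mul_le_mul (mul_le_mul_of_nonneg_right q1 (Real.exp_pos _).le)
          (mul_le_mul_of_nonneg_right q2 (Real.exp_pos _).le)
          (mul_nonneg n1 (Real.exp_pos _).le)
          (mul_nonneg (by linarith) (Real.exp_pos _).le)
    _ = ((1 + u) * Real.exp (-π*u)) * ((1 + v) * Real.exp (-π*v)) := by ring

noncomputable def Gfun (y : ℝ) : ℝ := Real.exp (-y) * y ^ ((1/8:ℝ) - 1)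

lemma intg_bound (n : ℕ) (hn : 1 ≤ n) {τ : ℝ} (hτ : τ ∈ Ioc (0:ℝ) (1/2)) {u v : ℝ}
    (hu : 0 < u) (hv : 0 < v) :
    |intg n τ (u, v)| ≤
      (2^(4*n-3) * (HC (4*n-3) * HC (4*n-3))) * (Gfun u * Gfun v) := by
  set k := 4*n-3 with hk
  have hGn : 0 ≤ Gfun u * Gfun v :=
    mul_nonneg (mul_nonneg (Real.exp_pos _).le (Real.rpow_nonneg hu.le _))
      (mul_nonneg (Real.exp_pos _).le (Real.rpow_nonneg hv.le _))
  by_cases h : 1 < u * v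
  · have hm : (4*n-4) + 1 = k := by omega
    have habs : |intg n τ (u,v)| =
        (|Real.log (u*v)| ^ (4*n-4) * |Real.log (u/v)|) *
          ((u ^ ((2*τ-3)/4) * v ^ ((-2*τ-3)/4)) * (jacobiPsi u * jacobiPsi v)) := by
      unfold intg
      simp only
      rw [if_pos h]
      rw [abs_mul, abs_mul, abs_mul, abs_mul, abs_mul, abs_mul, abs_pow]
      rw [abs_of_nonneg (Real.rpow_nonneg hu.le _), abs_of_nonneg (Real.rpow_nonneg hv.le _),
        abs_of_nonneg (psi_nonneg u), abs_of_nonneg (psi_nonneg v), abs_one]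
      ring
    have s1 : |Real.log (u*v)| ≤ |Real.log u| + |Real.log v| := by
      rw [Real.log_mul hu.ne' hv.ne']; exact abs_add_le _ _
    have s2 : |Real.log (u/v)| ≤ |Real.log u| + |Real.log v| := by
      rw [Real.log_div hu.ne' hv.ne']; exact abs_sub _ _
    have t1 : |Real.log (u*v)| ^ (4*n-4) * |Real.log (u/v)| ≤
        (|Real.log u| + |Real.log v|) ^ k := by
      rw [← hm, pow_succ]
      exact mul_le_mul (pow_le_pow_left₀ (abs_nonneg _) s1 _) s2 (abs_nonneg _)
        (pow_nonneg (by positivity) _)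
    have t2 := sum_pow_le k (abs_nonneg (Real.log u)) (abs_nonneg (Real.log v))
    have t3 := rpow_prod_le hτ hu hv h
    have t4 := psi_prod_le hu hv h
    have n3 : (0:ℝ) ≤ (u ^ ((2*τ-3)/4) * v ^ ((-2*τ-3)/4)) * (jacobiPsi u * jacobiPsi v) :=
      mul_nonneg (mul_nonneg (Real.rpow_nonneg hu.le _) (Real.rpow_nonneg hv.le _))
        (mul_nonneg (psi_nonneg u) (psi_nonneg v))
    have n4 : (0:ℝ) ≤ ((u ^ (-3/4:ℝ) + 1) * (v ^ (-3/4:ℝ) + 1)) *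
        (((1 + u) * Real.exp (-π*u)) * ((1 + v) * Real.exp (-π*v))) := by
      apply mul_nonneg (mul_nonneg (add_nonneg (Real.rpow_nonneg hu.le _) zero_le_one)
        (add_nonneg (Real.rpow_nonneg hv.le _) zero_le_one))
      exact mul_nonneg (mul_nonneg (by linarith) (Real.exp_pos _).le)
        (mul_nonneg (by linarith) (Real.exp_pos _).le)
    calc |intg n τ (u,v)|
        = (|Real.log (u*v)| ^ (4*n-4) * |Real.log (u/v)|) *
          ((u ^ ((2*τ-3)/4) * v ^ ((-2*τ-3)/4)) * (jacobiPsi u * jacobiPsi v)) := habs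
      _ ≤ ((|Real.log u| + |Real.log v|) ^ k) *
          (((u ^ (-3/4:ℝ) + 1) * (v ^ (-3/4:ℝ) + 1)) *
            (((1 + u) * Real.exp (-π*u)) * ((1 + v) * Real.exp (-π*v)))) := by
          apply mul_le_mul t1 _ n3 (pow_nonneg (by positivity) _)
          exact mul_le_mul t3 t4 (mul_nonneg (psi_nonneg u) (psi_nonneg v))
            (mul_nonneg (add_nonneg (Real.rpow_nonneg hu.le _) zero_le_one)
              (add_nonneg (Real.rpow_nonneg hv.le _) zero_le_one))
      _ ≤ (2^k * ((|Real.log u|^k + 1) * (|Real.log v|^k + 1))) *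
          (((u ^ (-3/4:ℝ) + 1) * (v ^ (-3/4:ℝ) + 1)) *
            (((1 + u) * Real.exp (-π*u)) * ((1 + v) * Real.exp (-π*v)))) :=
          mul_le_mul_of_nonneg_right t2 n4
      _ = 2^k * (Hfun k u * Hfun k v) := by unfold Hfun; ring
      _ ≤ 2^k * ((HC k * Gfun u) * (HC k * Gfun v)) := by
          apply mul_le_mul_of_nonneg_left _ (by positivity : (0:ℝ) ≤ 2^k)
          exact mul_le_mul (H_le k (by omega) hu) (H_le k (by omega) hv)
            (Hfun_nonneg k hv) (mul_nonneg (HC_nonneg k)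
              (mul_nonneg (Real.exp_pos _).le (Real.rpow_nonneg hu.le _)))
      _ = (2^k * (HC k * HC k)) * (Gfun u * Gfun v) := by unfold Gfun; ring
  · have hz : intg n τ (u,v) = 0 := by
      unfold intg
      simp only
      rw [if_neg h]
      ring
    rw [hz, abs_zero]
    exact mul_nonneg (mul_nonneg (by positivity) (mul_nonneg (HC_nonneg _) (HC_nonneg _))) hGn

lemma intg_measurable (n : ℕ) (τ : ℝ) : Measurable (intg n τ) := by
  have hL : Measurable fun p : ℝ×ℝ => (Real.log (p.1*p.2))^(4*n-4) :=
    ((measurable_fst.mul measurable_snd).log).pow_const _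
  have hd : Measurable fun p : ℝ×ℝ => Real.log (p.1/p.2) :=
    (measurable_fst.div measurable_snd).log
  have hru : Measurable fun p : ℝ×ℝ => p.1 ^ ((2*τ-3)/4) := by measurability
  have hrv : Measurable fun p : ℝ×ℝ => p.2 ^ ((-2*τ-3)/4) := by measurability
  have hite : Measurable fun p : ℝ×ℝ => (if 1 < p.1*p.2 then (1:ℝ) else 0) :=
    Measurable.ite (measurableSet_lt measurable_const (measurable_fst.mul measurable_snd))
      measurable_const measurable_const
  exact (((((hL.mul hd).mul hru).mul hrv).mul hite).mul
    (psi_measurable.comp measurable_fst)).mul (psi_measurable.comp measurable_snd)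

lemma measure_eq_restrict :
    ((volume : Measure ℝ).restrict (Ioi 0)).prod ((volume : Measure ℝ).restrict (Ioi 0)) =
      (volume : Measure (ℝ×ℝ)).restrict (Ioi 0 ×ˢ Ioi 0) := by
  rw [Measure.prod_restrict, ← Measure.volume_eq_prod]

lemma G_integrable : Integrable Gfun ((volume : Measure ℝ).restrict (Ioi 0)) := by
  have h := Real.GammaIntegral_convergent (s := 1/8) (by norm_num)
  exact h

lemma bound_integrable (n : ℕ) :
    Integrable (fun p : ℝ×ℝ => (2^(4*n-3) * (HC (4*n-3) * HC (4*n-3))) * (Gfun p.1 * Gfun p.2))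
      ((volume : Measure (ℝ×ℝ)).restrict (Ioi 0 ×ˢ Ioi 0)) := by
  rw [← measure_eq_restrict]
  exact (G_integrable.mul_prod G_integrable).const_mul _

lemma intg_integrable (n : ℕ) (hn : 1 ≤ n) {τ : ℝ} (hτ : τ ∈ Ioc (0:ℝ) (1/2)) :
    IntegrableOn (intg n τ) (Ioi 0 ×ˢ Ioi 0) := by
  apply Integrable.mono' (bound_integrable n) ((intg_measurable n τ).aestronglyMeasurable)
  rw [ae_restrict_iff' (measurableSet_Ioi.prod measurableSet_Ioi)]
  filter_upwards with p hp
  obtain ⟨hu, hv⟩ := hp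
  rw [Real.norm_eq_abs]
  exact intg_bound n hn hτ hu hv

lemma intg_swap_integrable (n : ℕ) (hn : 1 ≤ n) {τ : ℝ} (hτ : τ ∈ Ioc (0:ℝ) (1/2)) :
    IntegrableOn (fun p : ℝ×ℝ => intg n τ p.swap) (Ioi 0 ×ˢ Ioi 0) := by
  apply Integrable.mono' (bound_integrable n)
    (((intg_measurable n τ).comp measurable_swap).aestronglyMeasurable)
  rw [ae_restrict_iff' (measurableSet_Ioi.prod measurableSet_Ioi)]
  filter_upwards with p hp
  obtain ⟨hu, hv⟩ := hp
  rw [Real.norm_eq_abs]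
  calc |intg n τ p.swap| ≤ (2^(4*n-3) * (HC (4*n-3) * HC (4*n-3))) * (Gfun p.2 * Gfun p.1) :=
        intg_bound n hn hτ hv hu
    _ = (2^(4*n-3) * (HC (4*n-3) * HC (4*n-3))) * (Gfun p.1 * Gfun p.2) := by ring

lemma Phi_nonneg (n : ℕ) (u v : ℝ) : 0 ≤ Phi n u v := by
  unfold Phi
  apply mul_nonneg (mul_nonneg (Even.pow_nonneg ⟨2*n-2, by omega⟩ _) (Real.exp_pos _).le)
  apply mul_nonneg _ (mul_nonneg (psi_nonneg u) (psi_nonneg v))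
  split_ifs <;> norm_num

lemma Phi_pos (n : ℕ) (hn : 1 ≤ n) {u v : ℝ} (hu : 0 < u) (hv : 0 < v) (h : 1 < u*v) :
    0 < Phi n u v := by
  unfold Phi
  apply mul_pos (mul_pos (pow_pos (Real.log_pos h) _) (Real.exp_pos _))
  rw [if_pos h, one_mul]
  exact mul_pos (psi_pos hu) (psi_pos hv)

lemma swap_integral_eq (n : ℕ) (τ : ℝ) :
    ∫ p in Ioi (0:ℝ) ×ˢ Ioi (0:ℝ), intg n τ p.swap = ∫ p in Ioi (0:ℝ) ×ˢ Ioi (0:ℝ), intg n τ p := by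
  rw [← measure_eq_restrict]
  exact integral_prod_swap (intg n τ)

theorem B_pos_and_monotone (n : ℕ) (hn : 1 ≤ n) :
    (∀ τ : ℝ, τ ∈ Set.Ioc (0 : ℝ) (1 / 2) → 0 < B n τ) ∧
    (∀ τ₁ τ₂ : ℝ, τ₁ ∈ Set.Ioc (0 : ℝ) (1 / 2) → τ₂ ∈ Set.Ioc (0 : ℝ) (1 / 2) →
      τ₁ ≤ τ₂ → B n τ₁ ≤ B n τ₂) := by
  have hBdef : ∀ τ : ℝ, B n τ = ∫ p in Ioi (0:ℝ) ×ˢ Ioi (0:ℝ), intg n τ p := fun τ => rfl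
  have hkey : ∀ τ : ℝ, τ ∈ Ioc (0:ℝ) (1/2) →
      (∫ p in Ioi (0:ℝ) ×ˢ Ioi (0:ℝ), (intg n τ p + intg n τ p.swap)) = B n τ + B n τ := by
    intro τ hτ
    rw [integral_add (intg_integrable n hn hτ) (intg_swap_integrable n hn hτ),
      swap_integral_eq, hBdef]
  constructor
  · intro τ hτ
    have hae : 0 ≤ᵐ[(volume : Measure (ℝ×ℝ)).restrict (Ioi 0 ×ˢ Ioi 0)]
        fun p => intg n τ p + intg n τ p.swap := by
      have h0 : ∀ᵐ p ∂((volume : Measure (ℝ×ℝ)).restrict (Ioi 0 ×ˢ Ioi 0)),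
          (0:ℝ) ≤ intg n τ p + intg n τ p.swap := by
        rw [ae_restrict_iff' (measurableSet_Ioi.prod measurableSet_Ioi)]
        filter_upwards with p hp
        obtain ⟨hu, hv⟩ := hp
        have := intg_symm_identity n τ hu hv
        have hval : intg n τ p + intg n τ p.swap = Phi n p.1 p.2 * Dk τ (Real.log p.1 - Real.log p.2) := by
          rw [show p = (p.1, p.2) from rfl] at this ⊢
          exact this
        rw [hval]
        exact mul_nonneg (Phi_nonneg n _ _) (Dk_nonneg hτ.1.le _)
      exact h0
    have hint : IntegrableOn (fun p : ℝ×ℝ => intg n τ p + intg n τ p.swap)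
        (Ioi (0:ℝ) ×ˢ Ioi (0:ℝ)) := (intg_integrable n hn hτ).add (intg_swap_integrable n hn hτ)
    have hpos : 0 < ∫ p in Ioi (0:ℝ) ×ˢ Ioi (0:ℝ), (intg n τ p + intg n τ p.swap) := by
      rw [setIntegral_pos_iff_support_of_nonneg_ae hae hint]
      set U : Set (ℝ×ℝ) := {p : ℝ×ℝ | 0 < p.2 ∧ p.2 < p.1 ∧ 1 < p.1*p.2} with hU
      have hUopen : IsOpen U := by
        apply IsOpen.inter (isOpen_lt continuous_const continuous_snd)
        exact IsOpen.inter (isOpen_lt continuous_snd continuous_fst)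
          (isOpen_lt continuous_const (continuous_fst.mul continuous_snd))
      have hUne : U.Nonempty := ⟨(2, 1), by norm_num [hU]⟩
      have hUsub : U ⊆ Function.support (fun p => intg n τ p + intg n τ p.swap) ∩
          (Ioi (0:ℝ) ×ˢ Ioi (0:ℝ)) := by
        intro p hp
        obtain ⟨h2, hlt, h1⟩ := hp
        have hu : 0 < p.1 := lt_trans h2 hlt
        constructor
        · have hval : intg n τ p + intg n τ p.swap =
              Phi n p.1 p.2 * Dk τ (Real.log p.1 - Real.log p.2) := by
            have := intg_symm_identity n τ hu h2
            rw [show p = (p.1, p.2) from rfl] at this ⊢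
            exact this
          simp only [Function.mem_support, hval]
          have hD : 0 < Dk τ (Real.log p.1 - Real.log p.2) :=
            Dk_pos hτ.1 (by linarith [Real.log_lt_log h2 hlt])
          exact (mul_pos (Phi_pos n hn hu h2 h1) hD).ne'
        · exact ⟨hu, h2⟩
      calc (0:ENNReal) < volume U := hUopen.measure_pos volume hUne
        _ ≤ _ := measure_mono hUsub
    have := hkey τ hτ
    linarith [hpos.trans_eq this]
  · intro τ₁ τ₂ hτ₁ hτ₂ hle
    have hmono : (∫ p in Ioi (0:ℝ) ×ˢ Ioi (0:ℝ), (intg n τ₁ p + intg n τ₁ p.swap)) ≤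
        ∫ p in Ioi (0:ℝ) ×ˢ Ioi (0:ℝ), (intg n τ₂ p + intg n τ₂ p.swap) := by
      apply setIntegral_mono_on
        ((intg_integrable n hn hτ₁).add (intg_swap_integrable n hn hτ₁))
        ((intg_integrable n hn hτ₂).add (intg_swap_integrable n hn hτ₂))
        (measurableSet_Ioi.prod measurableSet_Ioi)
      intro p hp
      obtain ⟨hu, hv⟩ := hp
      have h1 : intg n τ₁ p + intg n τ₁ p.swap =
          Phi n p.1 p.2 * Dk τ₁ (Real.log p.1 - Real.log p.2) := by
        have := intg_symm_identity n τ₁ hu hv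
        rw [show p = (p.1, p.2) from rfl] at this ⊢; exact this
      have h2 : intg n τ₂ p + intg n τ₂ p.swap =
          Phi n p.1 p.2 * Dk τ₂ (Real.log p.1 - Real.log p.2) := by
        have := intg_symm_identity n τ₂ hu hv
        rw [show p = (p.1, p.2) from rfl] at this ⊢; exact this
      show intg n τ₁ p + intg n τ₁ p.swap ≤ intg n τ₂ p + intg n τ₂ p.swap
      rw [h1, h2]
      exact mul_le_mul_of_nonneg_left (Dk_mono hτ₁.1.le hle _) (Phi_nonneg n _ _)
    have k1 := hkey τ₁ hτ₁
    have k2 := hkey τ₂ hτ₂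
    linarith
end
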